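/- arXiv:1908.06129 — 3 statements merged into one kernel-verified Lean document; each statement's English description precedes it below -/
import Mathlib

section
/- The oracle separable rule minimizes compound squared-error risk: for any separable decision rule δ with δ_i(X) = f(X_{i1}, X_{i2}) for a fixed function f, the risk R_n(θ, δ) = (1/n) Σ_i E[(θ_{i1} − δ_i)^2] satisfies R_n(θ, δ) ≥ R_n(θ, δ*), where δ*_i(X) = f*(X_{i1}, X_{i2}) with f*(x1, x2) = (Σ_j θ_{j1} p_j(x1, x2)) / (Σ_j p_j(x1, x2)) and p_j the joint density of two independent normals with means (θ_{j1}, θ_{j2}) and variances (σ1^2, σ2^2). -/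
open MeasureTheory Real
open scoped ENNReal

/-- Standard normal density. -/
noncomputable def gphi (x : ℝ) : ℝ := (Real.sqrt (2 * Real.pi))⁻¹ * Real.exp (-x ^ 2 / 2)

/-- Joint density of two independent normals with means `(t1, t2)` and
standard deviations `(σ1, σ2)`. -/
noncomputable def pdens (σ1 σ2 t1 t2 x1 x2 : ℝ) : ℝ :=
  gphi ((x1 - t1) / σ1) * gphi ((x2 - t2) / σ2) / (σ1 * σ2)

/-- Compound squared-error risk of a separable rule `f`:
`(1/n) Σ_i E[(θ_{i1} - f(X_{i1}, X_{i2}))^2]`, written as a lower integral. -/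
noncomputable def risk (n : ℕ) (σ1 σ2 : ℝ) (θ : Fin n → Fin 2 → ℝ) (f : ℝ → ℝ → ℝ) : ℝ≥0∞ :=
  (n : ℝ≥0∞)⁻¹ * ∑ i : Fin n, ∫⁻ x : ℝ × ℝ,
    ENNReal.ofReal ((θ i 0 - f x.1 x.2) ^ 2 * pdens σ1 σ2 (θ i 0) (θ i 1) x.1 x.2)

lemma key_min {n : ℕ} (t p : Fin n → ℝ) (hp : ∀ i, 0 < p i) (c : ℝ) :
    ∑ i, (t i - (∑ j, t j * p j) / (∑ j, p j)) ^ 2 * p i ≤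
      ∑ i, (t i - c) ^ 2 * p i := by
  rcases Nat.eq_zero_or_pos n with hn | hn
  · subst hn; simp
  set S := ∑ j, p j with hSdef
  set M := ∑ j, t j * p j with hMdef
  have hS : 0 < S := Finset.sum_pos (fun i _ => hp i)
    (by simp [Finset.univ_nonempty_iff, Fin.pos_iff_nonempty.mp hn])
  set cs := M / S with hcs
  have hMS : cs * S = M := div_mul_cancel₀ _ hS.ne'
  have hdiff : ∑ i, (t i - c) ^ 2 * p i - ∑ i, (t i - cs) ^ 2 * p i
      = (cs - c) * 2 * M - (cs - c) * (c + cs) * S := by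
    rw [← Finset.sum_sub_distrib]
    have : ∀ i ∈ Finset.univ, (t i - c) ^ 2 * p i - (t i - cs) ^ 2 * p i
        = (cs - c) * 2 * (t i * p i) - (cs - c) * (c + cs) * p i := fun i _ => by ring
    rw [Finset.sum_congr rfl this, Finset.sum_sub_distrib, ← Finset.mul_sum, ← Finset.mul_sum]
  have h2 : (cs - c) * 2 * M - (cs - c) * (c + cs) * S = (cs - c) ^ 2 * S := by
    linear_combination (2 * (c - cs)) * hMS
  nlinarith [mul_nonneg (sq_nonneg (cs - c)) hS.le]

lemma gphi_pos (x : ℝ) : 0 < gphi x := by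
  unfold gphi
  positivity

lemma gphi_meas : Measurable gphi := by
  unfold gphi; fun_prop

lemma pdens_meas (σ1 σ2 t1 t2 : ℝ) :
    Measurable (fun x : ℝ × ℝ => pdens σ1 σ2 t1 t2 x.1 x.2) := by
  unfold pdens gphi; fun_prop

lemma pdens_pos (σ1 σ2 t1 t2 x1 x2 : ℝ) (hσ1 : 0 < σ1) (hσ2 : 0 < σ2) :
    0 < pdens σ1 σ2 t1 t2 x1 x2 := by
  unfold pdens
  exact div_pos (mul_pos (gphi_pos _) (gphi_pos _)) (mul_pos hσ1 hσ2)

/-- The oracle separable rule `f*(x1,x2) = Σ_j θ_{j1} p_j(x1,x2) / Σ_j p_j(x1,x2)`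
minimizes compound risk among all separable rules. -/
theorem stmt0 (n : ℕ) (σ1 σ2 : ℝ) (hσ1 : 0 < σ1) (hσ2 : 0 < σ2)
    (θ : Fin n → Fin 2 → ℝ) (f : ℝ → ℝ → ℝ)
    (hf : Measurable (fun x : ℝ × ℝ => f x.1 x.2)) :
    risk n σ1 σ2 θ (fun x1 x2 =>
        (∑ j : Fin n, θ j 0 * pdens σ1 σ2 (θ j 0) (θ j 1) x1 x2) /
        (∑ j : Fin n, pdens σ1 σ2 (θ j 0) (θ j 1) x1 x2)) ≤
      risk n σ1 σ2 θ f := by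
  unfold risk
  apply mul_le_mul_right
  set g : ℝ → ℝ → ℝ := fun x1 x2 =>
      (∑ j : Fin n, θ j 0 * pdens σ1 σ2 (θ j 0) (θ j 1) x1 x2) /
      (∑ j : Fin n, pdens σ1 σ2 (θ j 0) (θ j 1) x1 x2) with hg
  have hgm : Measurable (fun x : ℝ × ℝ => g x.1 x.2) := by
    apply Measurable.div
    · exact Finset.measurable_sum _ fun j _ => (pdens_meas σ1 σ2 _ _).const_mul _
    · exact Finset.measurable_sum _ fun j _ => pdens_meas σ1 σ2 _ _
  have hmeas : ∀ (h : ℝ → ℝ → ℝ), Measurable (fun x : ℝ × ℝ => h x.1 x.2) → ∀ i : Fin n,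
      Measurable (fun x : ℝ × ℝ =>
        ENNReal.ofReal ((θ i 0 - h x.1 x.2) ^ 2 * pdens σ1 σ2 (θ i 0) (θ i 1) x.1 x.2)) := by
    intro h hh i
    exact (((measurable_const.sub hh).pow_const 2).mul (pdens_meas σ1 σ2 _ _)).ennreal_ofReal
  rw [← lintegral_finset_sum _ (fun i _ => hmeas g hgm i),
      ← lintegral_finset_sum _ (fun i _ => hmeas f hf i)]
  apply lintegral_mono
  intro x
  simp only
  have hnn : ∀ (h : ℝ → ℝ → ℝ) (i : Fin n),
      0 ≤ (θ i 0 - h x.1 x.2) ^ 2 * pdens σ1 σ2 (θ i 0) (θ i 1) x.1 x.2 :=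
    fun h i => mul_nonneg (sq_nonneg _) (pdens_pos _ _ _ _ _ _ hσ1 hσ2).le
  rw [← ENNReal.ofReal_sum_of_nonneg (fun i _ => hnn g i),
      ← ENNReal.ofReal_sum_of_nonneg (fun i _ => hnn f i)]
  apply ENNReal.ofReal_le_ofReal
  exact key_min (fun j => θ j 0) (fun j => pdens σ1 σ2 (θ j 0) (θ j 1) x.1 x.2)
    (fun j => pdens_pos _ _ _ _ _ _ hσ1 hσ2) (f x.1 x.2)
end

section
/- Taylor remainder bound for the Gaussian kernel: for any real y and positive integer L, |exp(−y²/2) − Σ_{l=0}^{L−1} (−1)^l y^{2l} / (2^l l!)| ≤ (y² e / (2L))^L. Consequently, if y² ≤ M² and L = (1 + M² e / 2) log(1/γ) with 0 < γ ≤ e^{-e}, then the remainder is at most γ. -/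
open Real Finset
open scoped Nat

/-!
Write `Rₙ(u) = (-1)ⁿ (e^{-u} - ∑_{l<n} (-u)ˡ/l!)`. Then `R₀ = e^{-u}`, `Rₙ₊₁(0) = 0` and
`Rₙ₊₁' = Rₙ`, so integrating `0 ≤ Rₙ ≤ uⁿ/n!` from `0` gives the same bounds for `Rₙ₊₁`. With
`u = y²/2` and `n! ≥ nⁿ e⁻ⁿ` this is the first claim. For the second, with `t = log(1/γ) ≥ e`
the base is at most `1/t ≤ 1/e` and `L ≥ t`, so the bound is at most `e^{-L} ≤ e^{-t} = γ`.
-/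

theorem image_le_of_hasDerivAt_le {f g f' g' : ℝ → ℝ} {a u : ℝ}
    (hf : ∀ x, HasDerivAt f (f' x) x) (hg : ∀ x, HasDerivAt g (g' x) x)
    (ha : f a ≤ g a) (hle : ∀ x, a < x → f' x ≤ g' x) (hu : a ≤ u) : f u ≤ g u := by
  have hmono : MonotoneOn (g - f) (Set.Ici a) := by
    refine monotoneOn_of_hasDerivWithinAt_nonneg (convex_Ici a)
      (fun x _ ↦ ((hg x).sub (hf x)).continuousAt.continuousWithinAt)
      (fun x _ ↦ ((hg x).sub (hf x)).hasDerivWithinAt) fun x hx ↦ ?_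
    rw [interior_Ici] at hx
    exact sub_nonneg.2 (hle x hx)
  have h := hmono Set.self_mem_Ici hu hu
  simp only [Pi.sub_apply] at h
  linarith

theorem hasDerivAt_neg_pow_succ_div_factorial (n : ℕ) (u : ℝ) :
    HasDerivAt (fun u : ℝ ↦ (-u) ^ (n + 1) / (n + 1)!) (-((-u) ^ n / n !)) u := by
  refine (((hasDerivAt_neg u).fun_pow (n + 1)).div_const _).congr_deriv ?_
  push_cast [Nat.factorial_succ, Nat.add_sub_cancel]
  field_simp

theorem hasDerivAt_pow_succ_div_factorial (n : ℕ) (u : ℝ) :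
    HasDerivAt (fun u : ℝ ↦ u ^ (n + 1) / (n + 1)!) (u ^ n / n !) u := by
  refine ((hasDerivAt_pow (n + 1) u).div_const _).congr_deriv ?_
  push_cast [Nat.factorial_succ, Nat.add_sub_cancel]
  field_simp

theorem hasDerivAt_sum_range_succ_neg_pow_div_factorial (n : ℕ) (u : ℝ) :
    HasDerivAt (fun u : ℝ ↦ ∑ l ∈ range (n + 1), (-u) ^ l / l !)
      (-∑ l ∈ range n, (-u) ^ l / l !) u := by
  induction n with
  | zero => simpa using hasDerivAt_const u (1 : ℝ)
  | succ n ih =>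
    simp only [sum_range_succ _ (n + 1)]
    rw [sum_range_succ, neg_add]
    exact ih.fun_add (hasDerivAt_neg_pow_succ_div_factorial n u)

noncomputable def expNegRemainder (n : ℕ) (u : ℝ) : ℝ :=
  (-1) ^ n * (exp (-u) - ∑ l ∈ range n, (-u) ^ l / l !)

theorem expNegRemainder_succ_zero (n : ℕ) : expNegRemainder (n + 1) 0 = 0 := by
  simp [expNegRemainder, sum_range_succ']

theorem hasDerivAt_expNegRemainder_succ (n : ℕ) (u : ℝ) :
    HasDerivAt (expNegRemainder (n + 1)) (expNegRemainder n u) u := by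
  have h := ((hasDerivAt_neg u).exp.sub
    (hasDerivAt_sum_range_succ_neg_pow_div_factorial n u)).const_mul ((-1 : ℝ) ^ (n + 1))
  refine h.congr_deriv ?_
  rw [expNegRemainder, pow_succ]
  ring

theorem expNegRemainder_mem_Icc (n : ℕ) {u : ℝ} (hu : 0 ≤ u) :
    expNegRemainder n u ∈ Set.Icc 0 (u ^ n / n !) := by
  induction n generalizing u with
  | zero => simp [expNegRemainder, (exp_pos _).le, hu]
  | succ n ih =>
    refine ⟨?_, ?_⟩
    · exact image_le_of_hasDerivAt_le (fun x ↦ hasDerivAt_const x 0)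
        (hasDerivAt_expNegRemainder_succ n) (expNegRemainder_succ_zero n).ge
        (fun x hx ↦ (ih hx.le).1) hu
    · exact image_le_of_hasDerivAt_le (hasDerivAt_expNegRemainder_succ n)
        (hasDerivAt_pow_succ_div_factorial n) (by simp [expNegRemainder_succ_zero])
        (fun x hx ↦ (ih hx.le).2) hu

theorem abs_exp_neg_sub_sum_le (n : ℕ) {u : ℝ} (hu : 0 ≤ u) :
    |exp (-u) - ∑ l ∈ range n, (-u) ^ l / l !| ≤ u ^ n / n ! := by
  have h := expNegRemainder_mem_Icc n hu
  rw [expNegRemainder, Set.mem_Icc, ← abs_of_nonneg h.1] at h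
  simpa [abs_mul] using h.2

theorem pow_div_factorial_le_mul_exp_div_pow (n : ℕ) {u : ℝ} (hu : 0 ≤ u) :
    u ^ n / n ! ≤ (u * exp 1 / n) ^ n := by
  rcases n.eq_zero_or_pos with rfl | hn
  · simp
  have hn' : (0 : ℝ) < n := by exact_mod_cast hn
  have h := pow_div_factorial_le_exp _ hn'.le n
  rw [div_le_iff₀ (by positivity), ← exp_one_pow] at h
  rw [div_pow, mul_pow, div_le_div_iff₀ (by positivity) (by positivity), mul_assoc]
  exact mul_le_mul_of_nonneg_left h (by positivity)

theorem inv_pow_le_exp_neg {t : ℝ} {n : ℕ} (ht : exp 1 ≤ t) (hn : t ≤ n) :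
    t⁻¹ ^ n ≤ exp (-t) :=
  calc t⁻¹ ^ n ≤ (exp 1)⁻¹ ^ n := by gcongr; exact inv_nonneg.2 ((exp_pos 1).le.trans ht)
    _ = exp (-n) := by rw [← exp_neg, ← exp_nat_mul]; ring_nf
    _ ≤ exp (-t) := exp_le_exp.2 (neg_le_neg hn)

theorem abs_exp_neg_sq_half_sub_sum_le (y : ℝ) (n : ℕ) :
    |exp (-y ^ 2 / 2) - ∑ l ∈ range n, (-1 : ℝ) ^ l * y ^ (2 * l) / (2 ^ l * l !)| ≤
      (y ^ 2 * exp 1 / (2 * n)) ^ n := by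
  have hsum : ∑ l ∈ range n, (-1 : ℝ) ^ l * y ^ (2 * l) / (2 ^ l * l !) =
      ∑ l ∈ range n, (-(y ^ 2 / 2)) ^ l / l ! :=
    sum_congr rfl fun l _ ↦ by rw [neg_pow (y ^ 2 / 2), div_pow, pow_mul]; ring
  calc _ = |exp (-(y ^ 2 / 2)) - ∑ l ∈ range n, (-(y ^ 2 / 2)) ^ l / l !| := by
        rw [hsum, neg_div]
    _ ≤ (y ^ 2 / 2) ^ n / n ! := abs_exp_neg_sub_sum_le n (by positivity)
    _ ≤ (y ^ 2 / 2 * exp 1 / n) ^ n := pow_div_factorial_le_mul_exp_div_pow n (by positivity)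
    _ = _ := by ring

theorem stmt10_general (y : ℝ) (L : ℕ) :
    |Real.exp (-y ^ 2 / 2) -
        ∑ l ∈ Finset.range L, (-1 : ℝ) ^ l * y ^ (2 * l) / (2 ^ l * Nat.factorial l)| ≤
      (y ^ 2 * Real.exp 1 / (2 * L)) ^ L ∧
    (∀ M γ : ℝ, y ^ 2 ≤ M ^ 2 → 0 < γ → γ ≤ Real.exp (-Real.exp 1) →
      (L : ℝ) = (1 + M ^ 2 * Real.exp 1 / 2) * Real.log (1 / γ) →
      |Real.exp (-y ^ 2 / 2) -
          ∑ l ∈ Finset.range L, (-1 : ℝ) ^ l * y ^ (2 * l) / (2 ^ l * Nat.factorial l)| ≤ γ) := by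
  have hbound := abs_exp_neg_sq_half_sub_sum_le y L
  refine ⟨hbound, fun M γ hyM hγ hγe hL ↦ hbound.trans ?_⟩
  have hγt : γ = exp (-Real.log (1 / γ)) := by rw [one_div, log_inv, neg_neg, exp_log hγ]
  set t := Real.log (1 / γ)
  have het : exp 1 ≤ t := by
    rw [hγt, exp_le_exp] at hγe
    linarith
  have ht : 0 < t := (exp_pos 1).trans_le het
  have hM : 0 ≤ M ^ 2 * exp 1 / 2 := by positivity
  have htL : t ≤ L := by rw [hL]; nlinarith
  have hbase : y ^ 2 * exp 1 / (2 * L) ≤ t⁻¹ := by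
    calc y ^ 2 * exp 1 / (2 * L) ≤ M ^ 2 * exp 1 / (2 * L) := by gcongr
      _ ≤ t⁻¹ := by
        rw [hL, div_le_iff₀ (by positivity)]
        field_simp
        linarith
  calc _ ≤ t⁻¹ ^ L := pow_le_pow_left₀ (by positivity) hbase L
    _ ≤ exp (-t) := inv_pow_le_exp_neg het htL
    _ = γ := hγt.symm

/-- Taylor remainder bound for the Gaussian kernel: for any real `y` and positive
integer `L`, `|exp(−y²/2) − Σ_{l<L} (−1)^l y^{2l} / (2^l l!)| ≤ (y² e / (2L))^L`.
Consequently, if `y² ≤ M²` and `L = (1 + M² e / 2) log(1/γ)` with `0 < γ ≤ e^{-e}`,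
the remainder is at most `γ`. -/
theorem stmt10 (y : ℝ) (L : ℕ) (hL : 1 ≤ L) :
    |Real.exp (-y ^ 2 / 2) -
        ∑ l ∈ Finset.range L, (-1 : ℝ) ^ l * y ^ (2 * l) / (2 ^ l * Nat.factorial l)| ≤
      (y ^ 2 * Real.exp 1 / (2 * L)) ^ L ∧
    (∀ M γ : ℝ, y ^ 2 ≤ M ^ 2 → 0 < γ → γ ≤ Real.exp (-Real.exp 1) →
      (L : ℝ) = (1 + M ^ 2 * Real.exp 1 / 2) * Real.log (1 / γ) →
      |Real.exp (-y ^ 2 / 2) -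
          ∑ l ∈ Finset.range L, (-1 : ℝ) ^ l * y ^ (2 * l) / (2 ^ l * Nat.factorial l)| ≤ γ) :=
  stmt10_general y L
end

section
/- Moment-matching support reduction: given n points (t_{j1}, t_{j2}) in [−B, B]² and nonnegative integers P, Q, there exist at most K = (P+1)(Q+1) points (μ_{k1}, μ_{k2}) ∈ [−B, B]² and weights ω_k > 0 with Σ_k ω_k = 1 such that (1/n) Σ_{j=1}^n t_{j1}^m t_{j2}^{m'} = Σ_{k=1}^K μ_{k1}^m μ_{k2}^{m'} ω_k for all 0 ≤ m ≤ P and 0 ≤ m' ≤ Q. -/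
open Finset

/-- Moment-matching support reduction: given `n ≥ 1` points `(t_{j1}, t_{j2})` in
`[−B, B]²` and nonnegative integers `P, Q`, there exist at most `(P+1)(Q+1)` points
`(μ_{k1}, μ_{k2}) ∈ [−B, B]²` and positive weights `ω_k` summing to one such that
`(1/n) Σ_j t_{j1}^m t_{j2}^{m'} = Σ_k μ_{k1}^m μ_{k2}^{m'} ω_k` for all
`0 ≤ m ≤ P`, `0 ≤ m' ≤ Q`. -/
theorem stmt17 (B : ℝ) (hB : 0 < B) (n : ℕ) (hn : 1 ≤ n)
    (t : Fin n → ℝ × ℝ) (ht : ∀ j, |(t j).1| ≤ B ∧ |(t j).2| ≤ B) (P Q : ℕ) :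
    ∃ (K : ℕ), K ≤ (P + 1) * (Q + 1) ∧
      ∃ (μ : Fin K → ℝ × ℝ) (ω : Fin K → ℝ),
        (∀ k, |(μ k).1| ≤ B ∧ |(μ k).2| ≤ B) ∧
        (∀ k, 0 < ω k) ∧ (∑ k : Fin K, ω k = 1) ∧
        ∀ m m' : ℕ, m ≤ P → m' ≤ Q →
          (1 / (n : ℝ)) * ∑ j : Fin n, (t j).1 ^ m * (t j).2 ^ m' =
            ∑ k : Fin K, (μ k).1 ^ m * (μ k).2 ^ m' * ω k := by
  classical
  set ι₀ := {p : Fin (P + 1) × Fin (Q + 1) // p ≠ (0, 0)} with hι₀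
  let φ : ℝ × ℝ → (ι₀ → ℝ) := fun p i => p.1 ^ (i.1.1 : ℕ) * p.2 ^ (i.1.2 : ℕ)
  have hn' : (0 : ℝ) < n := by exact_mod_cast hn
  have hx : (n : ℝ)⁻¹ • ∑ j : Fin n, φ (t j) ∈ convexHull ℝ (Set.range (φ ∘ t)) := by
    have := Finset.centerMass_mem_convexHull (Finset.univ : Finset (Fin n))
      (w := fun _ => (1 : ℝ)) (z := fun j => φ (t j))
      (fun i _ => zero_le_one) (by simp [hn'])
      (fun i _ => Set.mem_range_self (f := φ ∘ t) i)
    simpa [Finset.centerMass] using this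
  obtain ⟨ι, hfin, z, w, hzs, hai, hw, hw1, hzx⟩ :=
    eq_pos_convex_span_of_mem_convexHull hx
  -- cardinality bound
  have hcard : Fintype.card ι ≤ (P + 1) * (Q + 1) := by
    have h2 : Module.finrank ℝ (vectorSpan ℝ (Set.range z)) ≤
        Module.finrank ℝ (ι₀ → ℝ) := Submodule.finrank_le _
    have h12 : Fintype.card ι ≤ Module.finrank ℝ (ι₀ → ℝ) + 1 :=
      hai.card_le_finrank_succ.trans (Nat.add_le_add_right h2 1)
    have h3 : Module.finrank ℝ (ι₀ → ℝ) = Fintype.card ι₀ :=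
      Module.finrank_fintype_fun_eq_card ℝ
    have h4 : Fintype.card ι₀ = (P + 1) * (Q + 1) - 1 := by
      have : Fintype.card ι₀ = Fintype.card (Fin (P+1) × Fin (Q+1)) - 1 := by
        simp only [hι₀]
        rw [Fintype.card_subtype_compl (p := fun p => p = (0,0))]
        simp [Fintype.card_subtype_eq]
      simpa using this
    have h5 : 1 ≤ (P + 1) * (Q + 1) := Nat.one_le_iff_ne_zero.2 (by positivity)
    omega
  -- choose preimages
  have hpre : ∀ i : ι, ∃ j : Fin n, φ (t j) = z i := fun i => hzs ⟨i, rfl⟩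
  choose pre hpre' using hpre
  let e := Fintype.equivFin ι
  refine ⟨Fintype.card ι, hcard, fun k => t (pre (e.symm k)), fun k => w (e.symm k),
    fun k => ht _, fun k => hw _, ?_, ?_⟩
  · rw [Equiv.sum_comp e.symm]; exact hw1
  · intro m m' hm hm'
    by_cases h0 : m = 0 ∧ m' = 0
    · obtain ⟨rfl, rfl⟩ := h0
      simp only [pow_zero, one_mul, Finset.sum_const, Finset.card_univ, Fintype.card_fin,
        nsmul_eq_mul, mul_one]
      rw [one_div, inv_mul_cancel₀ (ne_of_gt hn'), Equiv.sum_comp e.symm]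
      exact hw1.symm
    · have hne : ((⟨m, Nat.lt_succ_of_le hm⟩, ⟨m', Nat.lt_succ_of_le hm'⟩) :
          Fin (P+1) × Fin (Q+1)) ≠ (0, 0) := by
        intro h
        exact h0 ⟨Fin.mk_eq_mk.mp (congrArg Prod.fst h),
          Fin.mk_eq_mk.mp (congrArg Prod.snd h)⟩
      set i₀ : ι₀ := ⟨(⟨m, Nat.lt_succ_of_le hm⟩, ⟨m', Nat.lt_succ_of_le hm'⟩), hne⟩
      have hkey : ∑ i : ι, w i * φ (t (pre i)) i₀ =
          (n : ℝ)⁻¹ * ∑ j : Fin n, φ (t j) i₀ := by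
        have h := congrFun hzx i₀
        rw [Finset.sum_apply, Pi.smul_apply, Finset.sum_apply, smul_eq_mul] at h
        rw [← h]
        exact Finset.sum_congr rfl fun i _ => by rw [Pi.smul_apply, smul_eq_mul, ← hpre' i]
      have hφ : ∀ p : ℝ × ℝ, φ p i₀ = p.1 ^ m * p.2 ^ m' := fun p => rfl
      calc (1 / (n : ℝ)) * ∑ j : Fin n, (t j).1 ^ m * (t j).2 ^ m'
          = (n : ℝ)⁻¹ * ∑ j : Fin n, φ (t j) i₀ := by rw [one_div]
        _ = ∑ i : ι, w i * φ (t (pre i)) i₀ := hkey.symm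
        _ = ∑ k : Fin (Fintype.card ι),
              (t (pre (e.symm k))).1 ^ m * (t (pre (e.symm k))).2 ^ m' * w (e.symm k) := by
            rw [← Equiv.sum_comp e.symm (fun i => w i * φ (t (pre i)) i₀)]
            exact Finset.sum_congr rfl fun k _ => by rw [hφ]; ring
end
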